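/- There exists an absolute constant C such that for all x ≥ 1, Σ_{r > x} 1/(r·φ(r)) ≤ C/x, where the sum is over integers r > x and φ is Euler's totient function. -/

import Mathlib

/-!
Since `n = ∑_{d ∣ n} φ(n/d)` and `φ(d) φ(n/d) ≤ φ(n)`, we have `n/φ(n) ≤ ∑_{d ∣ n} 1/φ(d)`, hence
`1/(n φ(n)) ≤ ∑_{dm = n} 1/(φ(d) d² m²)`. Summing over `n > x` and exchanging the sums, the inner
sum over `m > x/d` is at most `2d/x`, which leaves `(2/x) ∑_d 1/(d φ(d))`. The same argument with
`x = 0`, where the inner sum is at most `2` and `φ(d) ≥ 1`, bounds this last series by `4`.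
All series are summed in `ℝ≥0∞`, so exchanging them needs no summability argument.
-/

open Finset
open scoped ENNReal Nat

theorem ENNReal.tsum_sum_divisorsAntidiagonal {f : ℕ → ℕ → ℝ≥0∞}
    (hf : ∀ a b, a * b = 0 → f a b = 0) :
    ∑' n : ℕ, ∑ p ∈ n.divisorsAntidiagonal, f p.1 p.2 = ∑' a, ∑' b, f a b := by
  have hinj : Function.Injective fun q : Σ n : ℕ, n.divisorsAntidiagonal => q.2.1 := by
    rintro ⟨n, p, hp⟩ ⟨n', p', hp'⟩ (rfl : p = p')
    rw [Nat.mem_divisorsAntidiagonal] at hp hp'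
    obtain rfl : n = n' := hp.1.symm.trans hp'.1
    rfl
  have hsupp : Function.support (fun p : ℕ × ℕ => f p.1 p.2) ⊆
      Set.range fun q : Σ n : ℕ, n.divisorsAntidiagonal => q.2.1 := by
    intro p hp
    have hp0 : p.1 * p.2 ≠ 0 := fun h => hp (hf _ _ h)
    exact ⟨⟨p.1 * p.2, p, Nat.mem_divisorsAntidiagonal.2 ⟨rfl, hp0⟩⟩, rfl⟩
  calc ∑' n : ℕ, ∑ p ∈ n.divisorsAntidiagonal, f p.1 p.2
      = ∑' q : Σ n : ℕ, n.divisorsAntidiagonal, f q.2.1.1 q.2.1.2 := by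
        rw [ENNReal.tsum_sigma']
        exact tsum_congr fun n => (Finset.tsum_subtype _ fun p : ℕ × ℕ => f p.1 p.2).symm
    _ = ∑' p : ℕ × ℕ, f p.1 p.2 := hinj.tsum_eq hsupp
    _ = ∑' a, ∑' b, f a b := ENNReal.tsum_prod

theorem Nat.cast_le_totient_mul_sum_inv_totient (n : ℕ) :
    (n : ℝ≥0∞) ≤ φ n * ∑ d ∈ n.divisors, (φ d : ℝ≥0∞)⁻¹ := by
  calc (n : ℝ≥0∞) = ∑ d ∈ n.divisors, (φ (n / d) : ℝ≥0∞) := by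
        rw [← Nat.cast_sum, Nat.sum_div_divisors n φ, Nat.sum_totient]
    _ ≤ ∑ d ∈ n.divisors, φ n * (φ d : ℝ≥0∞)⁻¹ := by
        gcongr with d hd
        have hφd : (φ d : ℝ≥0∞) ≠ 0 := by simpa using (Nat.pos_of_mem_divisors hd).ne'
        have hmul : φ d * φ (n / d) ≤ φ n := by
          simpa [Nat.mul_div_cancel' (Nat.dvd_of_mem_divisors hd)] using
            Nat.totient_super_multiplicative d (n / d)
        rw [← div_eq_mul_inv, ENNReal.le_div_iff_mul_le (.inl hφd) (.inl (by simp)), mul_comm]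
        exact_mod_cast hmul
    _ = φ n * ∑ d ∈ n.divisors, (φ d : ℝ≥0∞)⁻¹ := (mul_sum _ _ _).symm

theorem Nat.inv_mul_totient_le (n : ℕ) (hn : n ≠ 0) :
    ((n : ℝ≥0∞) * φ n)⁻¹ ≤ ((n : ℝ≥0∞) ^ 2)⁻¹ * ∑ d ∈ n.divisors, (φ d : ℝ≥0∞)⁻¹ := by
  have hn' : (n : ℝ≥0∞) ≠ 0 := by exact_mod_cast hn
  have hφ : (φ n : ℝ≥0∞) ≠ 0 := by simpa using hn
  rw [ENNReal.inv_le_iff_le_mul (fun _ => mul_ne_zero hn' hφ)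
    (fun h => absurd h (ENNReal.mul_ne_top (by simp) (by simp)))]
  calc (1 : ℝ≥0∞) = ((n : ℝ≥0∞) ^ 2)⁻¹ * (n * n) := by
        rw [← pow_two, ENNReal.inv_mul_cancel (by simpa) (by simp)]
    _ ≤ ((n : ℝ≥0∞) ^ 2)⁻¹ * (n * (φ n * ∑ d ∈ n.divisors, (φ d : ℝ≥0∞)⁻¹)) := by
        gcongr
        exact n.cast_le_totient_mul_sum_inv_totient
    _ = n * φ n * (((n : ℝ≥0∞) ^ 2)⁻¹ * ∑ d ∈ n.divisors, (φ d : ℝ≥0∞)⁻¹) := by ring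

theorem ENNReal.tsum_inv_sq_gt_le (k : ℕ) :
    ∑' m : ℕ, (if k < m then ((m : ℝ≥0∞) ^ 2)⁻¹ else 0) ≤ ENNReal.ofReal (2 / (k + 1)) := by
  rw [ENNReal.tsum_eq_iSup_nat]
  refine iSup_le fun n => ?_
  have hterm : ∀ m ∈ Ioo k n, ((m : ℝ≥0∞) ^ 2)⁻¹ = ENNReal.ofReal ((m : ℝ) ^ 2)⁻¹ := by
    intro m hm
    have hm : (0 : ℝ) < m := by exact_mod_cast (Nat.zero_le k).trans_lt (mem_Ioo.1 hm).1
    rw [ENNReal.ofReal_inv_of_pos (by positivity), ENNReal.ofReal_pow hm.le,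
      ENNReal.ofReal_natCast]
  have hfilter : (range n).filter (k < ·) = Ioo k n := by
    ext m
    simp only [mem_filter, mem_range, mem_Ioo]
    omega
  rw [← sum_filter, hfilter, sum_congr rfl hterm,
    ← ENNReal.ofReal_sum_of_nonneg (fun _ _ => by positivity)]
  exact ENNReal.ofReal_le_ofReal (sum_Ioo_inv_sq_le k n)

theorem ENNReal.tsum_inv_sq_mul_gt_le {x : ℝ} (hx : 0 < x) {d : ℕ} (hd : d ≠ 0) :
    ∑' m : ℕ, (if x < d * m then ((m : ℝ≥0∞) ^ 2)⁻¹ else 0) ≤ ENNReal.ofReal (2 / x) * d := by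
  have hd' : (0 : ℝ) < d := by positivity
  have hcond : ∀ m : ℕ, x < d * m ↔ ⌊x / d⌋₊ < m := fun m => by
    rw [Nat.floor_lt (by positivity), div_lt_iff₀' hd']
  simp_rw [hcond]
  refine (tsum_inv_sq_gt_le _).trans ?_
  rw [← ENNReal.ofReal_natCast, ← ENNReal.ofReal_mul (by positivity)]
  refine ENNReal.ofReal_le_ofReal ?_
  calc 2 / ((⌊x / d⌋₊ : ℝ) + 1) ≤ 2 / (x / d) := by
        gcongr
        exact (Nat.lt_floor_add_one _).le
    _ = 2 / x * d := by field_simp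

noncomputable def invMulTotientTail (x : ℝ) : ℝ≥0∞ :=
  ∑' n : ℕ, if x < n then ((n : ℝ≥0∞) * φ n)⁻¹ else 0

theorem invMulTotientTail_le_tsum {x : ℝ} (hx : 0 ≤ x) :
    invMulTotientTail x ≤
      ∑' d : ℕ, (φ d : ℝ≥0∞)⁻¹ * ((d : ℝ≥0∞) ^ 2)⁻¹ *
        ∑' m : ℕ, if x < d * m then ((m : ℝ≥0∞) ^ 2)⁻¹ else 0 := by
  have hpoint : ∀ n : ℕ, (if x < n then ((n : ℝ≥0∞) * φ n)⁻¹ else 0) ≤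
      ∑ p ∈ n.divisorsAntidiagonal, (φ p.1 : ℝ≥0∞)⁻¹ * ((p.1 : ℝ≥0∞) ^ 2)⁻¹ *
        if x < p.1 * p.2 then ((p.2 : ℝ≥0∞) ^ 2)⁻¹ else 0 := by
    intro n
    by_cases hxn : x < n
    · have hn : n ≠ 0 := by rintro rfl; simp at hxn; linarith
      rw [if_pos hxn]
      calc ((n : ℝ≥0∞) * φ n)⁻¹
          ≤ ((n : ℝ≥0∞) ^ 2)⁻¹ * ∑ d ∈ n.divisors, (φ d : ℝ≥0∞)⁻¹ := n.inv_mul_totient_le hn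
        _ = ∑ p ∈ n.divisorsAntidiagonal, ((n : ℝ≥0∞) ^ 2)⁻¹ * (φ p.1 : ℝ≥0∞)⁻¹ := by
          rw [mul_sum, Nat.sum_divisorsAntidiagonal fun d _ => ((n : ℝ≥0∞) ^ 2)⁻¹ * (φ d : ℝ≥0∞)⁻¹]
        _ = _ := sum_congr rfl fun p hp => by
          obtain ⟨rfl, -⟩ := Nat.mem_divisorsAntidiagonal.1 hp
          push_cast at hxn ⊢
          rw [if_pos hxn, mul_pow, ENNReal.mul_inv (.inr (by simp)) (.inl (by simp))]
          ring
    · rw [if_neg hxn]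
      exact zero_le
  calc invMulTotientTail x
      ≤ ∑' n : ℕ, ∑ p ∈ n.divisorsAntidiagonal, (φ p.1 : ℝ≥0∞)⁻¹ * ((p.1 : ℝ≥0∞) ^ 2)⁻¹ *
          if x < p.1 * p.2 then ((p.2 : ℝ≥0∞) ^ 2)⁻¹ else 0 := ENNReal.tsum_le_tsum hpoint
    _ = ∑' d : ℕ, ∑' m : ℕ, (φ d : ℝ≥0∞)⁻¹ * ((d : ℝ≥0∞) ^ 2)⁻¹ *
          if x < d * m then ((m : ℝ≥0∞) ^ 2)⁻¹ else 0 := by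
      refine ENNReal.tsum_sum_divisorsAntidiagonal (f := fun d m => (φ d : ℝ≥0∞)⁻¹ *
        ((d : ℝ≥0∞) ^ 2)⁻¹ * if x < d * m then ((m : ℝ≥0∞) ^ 2)⁻¹ else 0) fun a b hab => ?_
      have hab' : (a : ℝ) * b = 0 := by exact_mod_cast hab
      simp [hab', not_lt.2 hx]
    _ = _ := tsum_congr fun d => ENNReal.tsum_mul_left

theorem invMulTotientTail_zero_le : invMulTotientTail 0 ≤ 4 := by
  calc invMulTotientTail 0
      ≤ ∑' d : ℕ, (φ d : ℝ≥0∞)⁻¹ * ((d : ℝ≥0∞) ^ 2)⁻¹ *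
        ∑' m : ℕ, (if (0 : ℝ) < d * m then ((m : ℝ≥0∞) ^ 2)⁻¹ else 0) :=
        invMulTotientTail_le_tsum le_rfl
    _ ≤ ∑' d : ℕ, 2 * (if 0 < d then ((d : ℝ≥0∞) ^ 2)⁻¹ else 0) := by
      refine ENNReal.tsum_le_tsum fun d => ?_
      rcases Nat.eq_zero_or_pos d with rfl | hd
      · simp
      have hcond : ∀ m : ℕ, (0 : ℝ) < d * m ↔ 0 < m := fun m => by
        rw [mul_pos_iff_of_pos_left (by exact_mod_cast hd), Nat.cast_pos]
      simp_rw [hcond, if_pos hd]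
      calc (φ d : ℝ≥0∞)⁻¹ * ((d : ℝ≥0∞) ^ 2)⁻¹ *
            ∑' m : ℕ, (if 0 < m then ((m : ℝ≥0∞) ^ 2)⁻¹ else 0)
          ≤ 1 * ((d : ℝ≥0∞) ^ 2)⁻¹ * 2 := by
            gcongr
            · exact ENNReal.inv_le_one.2 (by exact_mod_cast Nat.totient_pos.2 hd)
            · simpa using ENNReal.tsum_inv_sq_gt_le 0
        _ = 2 * ((d : ℝ≥0∞) ^ 2)⁻¹ := by ring
    _ = 2 * ∑' d : ℕ, (if 0 < d then ((d : ℝ≥0∞) ^ 2)⁻¹ else 0) := ENNReal.tsum_mul_left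
    _ ≤ 2 * 2 := by
      gcongr
      simpa using ENNReal.tsum_inv_sq_gt_le 0
    _ = 4 := by norm_num

theorem invMulTotientTail_le_mul_invMulTotientTail_zero {x : ℝ} (hx : 0 < x) :
    invMulTotientTail x ≤ ENNReal.ofReal (2 / x) * invMulTotientTail 0 := by
  calc invMulTotientTail x
      ≤ ∑' d : ℕ, (φ d : ℝ≥0∞)⁻¹ * ((d : ℝ≥0∞) ^ 2)⁻¹ *
        ∑' m : ℕ, (if x < d * m then ((m : ℝ≥0∞) ^ 2)⁻¹ else 0) :=
        invMulTotientTail_le_tsum hx.le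
    _ ≤ ∑' d : ℕ, ENNReal.ofReal (2 / x) *
          (if (0 : ℝ) < d then ((d : ℝ≥0∞) * φ d)⁻¹ else 0) := by
      refine ENNReal.tsum_le_tsum fun d => ?_
      rcases Nat.eq_zero_or_pos d with rfl | hd
      · simp [not_lt.2 hx.le]
      have hd0 : (d : ℝ≥0∞) ≠ 0 := by exact_mod_cast hd.ne'
      rw [if_pos (by exact_mod_cast hd)]
      calc (φ d : ℝ≥0∞)⁻¹ * ((d : ℝ≥0∞) ^ 2)⁻¹ *
            ∑' m : ℕ, (if x < d * m then ((m : ℝ≥0∞) ^ 2)⁻¹ else 0)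
          ≤ (φ d : ℝ≥0∞)⁻¹ * ((d : ℝ≥0∞) ^ 2)⁻¹ * (ENNReal.ofReal (2 / x) * d) := by
            gcongr
            exact ENNReal.tsum_inv_sq_mul_gt_le hx hd.ne'
        _ = ENNReal.ofReal (2 / x) * ((d : ℝ≥0∞)⁻¹ * (φ d : ℝ≥0∞)⁻¹) * ((d : ℝ≥0∞)⁻¹ * d) := by
            rw [ENNReal.inv_pow]
            ring
        _ = ENNReal.ofReal (2 / x) * ((d : ℝ≥0∞) * φ d)⁻¹ := by
            rw [ENNReal.inv_mul_cancel hd0 (by simp), mul_one,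
              ENNReal.mul_inv (.inl hd0) (.inl (by simp))]
    _ = ENNReal.ofReal (2 / x) * invMulTotientTail 0 := ENNReal.tsum_mul_left

theorem invMulTotientTail_le {x : ℝ} (hx : 0 < x) :
    invMulTotientTail x ≤ ENNReal.ofReal (8 / x) := by
  calc invMulTotientTail x ≤ ENNReal.ofReal (2 / x) * invMulTotientTail 0 :=
        invMulTotientTail_le_mul_invMulTotientTail_zero hx
    _ ≤ ENNReal.ofReal (2 / x) * ENNReal.ofReal 4 := by
        rw [ENNReal.ofReal_ofNat]
        gcongr
        exact invMulTotientTail_zero_le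
    _ = ENNReal.ofReal (8 / x) := by
        rw [← ENNReal.ofReal_mul (by positivity)]
        ring_nf

theorem ENNReal.summable_toReal_and_tsum_toReal_le {ι : Type*} {f : ι → ℝ≥0∞} {c : ℝ}
    (hc : 0 ≤ c) (h : ∑' i, f i ≤ ENNReal.ofReal c) :
    Summable (fun i => (f i).toReal) ∧ ∑' i, (f i).toReal ≤ c := by
  have htop : ∑' i, f i ≠ ∞ := ne_top_of_le_ne_top ENNReal.ofReal_ne_top h
  refine ⟨ENNReal.summable_toReal htop, ?_⟩
  rw [← ENNReal.tsum_toReal_eq (ENNReal.ne_top_of_tsum_ne_top htop)]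
  exact ENNReal.toReal_le_of_le_ofReal hc h

/-- There is an absolute constant `C` such that for all real `x ≥ 1`,
`Σ_{r > x} 1/(r·φ(r)) ≤ C/x`. -/
theorem stmt4 :
    ∃ C : ℝ, ∀ x : ℝ, 1 ≤ x →
      Summable (fun r : ℕ => if x < (r : ℝ) then 1 / ((r : ℝ) * (Nat.totient r : ℝ)) else 0) ∧
      (∑' r : ℕ, if x < (r : ℝ) then 1 / ((r : ℝ) * (Nat.totient r : ℝ)) else 0) ≤ C / x := by
  refine ⟨8, fun x hx => ?_⟩
  have hx0 : 0 < x := by linarith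
  simpa [apply_ite ENNReal.toReal] using
    ENNReal.summable_toReal_and_tsum_toReal_le (by positivity) (invMulTotientTail_le hx0)
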